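/- Let c > 2, λ₁ = c²(1 − √(1 − 4/c²))/2, and φ̃₁(t) = (1/2)e^{λ₁ t} for t ≤ 0, φ̃₁(t) = 1 − (1/2)e^{−λ₁ t} for t > 0. Then for every t ∈ ℝ \ {0}, φ̃₁'(t) − (1/c²)φ̃₁''(t) ≥ φ̃₁(t)(1 − φ̃₁(t)). -/

import Mathlib

/-!
Since `λ₁ - λ₁² / c² = 1`, on `t < 0` we get `φ' - φ'' / c² = φ`, and on `t > 0` the same computation
for `1 - φ = e^{-λ₁ t} / 2` gives `φ' - φ'' / c² = (λ₁ + λ₁² / c²)(1 - φ) ≥ 1 - φ`. Both `φ` and `1 - φ`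
dominate `φ (1 - φ)`, the differences being `φ²` and `(1 - φ)²`.
-/

open Real Filter Topology

noncomputable def smallerRoot (c : ℝ) : ℝ := c ^ 2 * (1 - √(1 - 4 / c ^ 2)) / 2

lemma smallerRoot_sub_sq_div_sq {c : ℝ} (hc : 4 ≤ c ^ 2) :
    smallerRoot c - smallerRoot c ^ 2 / c ^ 2 = 1 := by
  have hc2 : 0 < c ^ 2 := by positivity
  have hs : c ^ 2 * √(1 - 4 / c ^ 2) ^ 2 = c ^ 2 - 4 := by
    rw [sq_sqrt (by rw [sub_nonneg, div_le_one hc2]; exact hc), mul_sub, mul_one, mul_div_cancel₀ _ hc2.ne']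
  unfold smallerRoot
  field_simp
  linear_combination -hs

lemma deriv_const_mul_exp_mul (k a : ℝ) :
    deriv (fun x => k * exp (a * x)) = fun x => k * a * exp (a * x) := by
  funext x
  rw [(((hasDerivAt_id' x).const_mul a).exp.const_mul k).deriv]
  ring

lemma deriv_const_sub_const_mul_exp_mul (b k a : ℝ) :
    deriv (fun x => b - k * exp (a * x)) = fun x => -(k * a) * exp (a * x) := by
  funext x
  rw [deriv_const_sub, deriv_const_mul_exp_mul, neg_mul]

lemma deriv_sub_deriv_deriv_half_exp {c l : ℝ} (hl : l - l ^ 2 / c ^ 2 = 1) (t : ℝ) :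
    deriv (fun x => 1 / 2 * exp (l * x)) t
      - 1 / c ^ 2 * deriv (deriv fun x => 1 / 2 * exp (l * x)) t = 1 / 2 * exp (l * t) := by
  rw [deriv_const_mul_exp_mul, deriv_const_mul_exp_mul]
  linear_combination (1 / 2 * exp (l * t)) * hl

lemma deriv_sub_deriv_deriv_one_sub_half_exp {c l : ℝ} (hl : l - l ^ 2 / c ^ 2 = 1) (t : ℝ) :
    1 / 2 * exp (-l * t) ≤ deriv (fun x => 1 - 1 / 2 * exp (-l * x)) t
      - 1 / c ^ 2 * deriv (deriv fun x => 1 - 1 / 2 * exp (-l * x)) t := by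
  rw [deriv_const_sub_const_mul_exp_mul, deriv_const_mul_exp_mul]
  have : 0 ≤ l ^ 2 / c ^ 2 * exp (-l * t) := by positivity
  linear_combination (-(1 / 2) * exp (-l * t)) * hl + this

theorem upper_profile_inequality (c : ℝ) (hc : 2 < c) :
    let lam1 := c ^ 2 * (1 - Real.sqrt (1 - 4 / c ^ 2)) / 2
    let φ : ℝ → ℝ := fun t =>
      if t ≤ 0 then (1 / 2) * Real.exp (lam1 * t) else 1 - (1 / 2) * Real.exp (-lam1 * t)
    ∀ t : ℝ, t ≠ 0 →
      deriv φ t - (1 / c ^ 2) * deriv (deriv φ) t ≥ φ t * (1 - φ t) := by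
  intro lam1 φ t ht
  have hl : lam1 - lam1 ^ 2 / c ^ 2 = 1 := smallerRoot_sub_sq_div_sq (by nlinarith)
  rcases ht.lt_or_gt with ht | ht
  · have heq : φ =ᶠ[𝓝 t] fun x => 1 / 2 * exp (lam1 * x) := by
      filter_upwards [Iio_mem_nhds ht] with x hx
      exact if_pos hx.le
    rw [heq.deriv_eq, heq.deriv.deriv_eq, heq.eq_of_nhds, deriv_sub_deriv_deriv_half_exp hl]
    nlinarith [sq_nonneg (1 / 2 * exp (lam1 * t))]
  · have heq : φ =ᶠ[𝓝 t] fun x => 1 - 1 / 2 * exp (-lam1 * x) := by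
      filter_upwards [Ioi_mem_nhds ht] with x hx
      exact if_neg (not_le.mpr hx)
    rw [heq.deriv_eq, heq.deriv.deriv_eq, heq.eq_of_nhds]
    nlinarith [deriv_sub_deriv_deriv_one_sub_half_exp hl t, sq_nonneg (1 / 2 * exp (-lam1 * t))]
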